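/- arXiv:2111.03787 — 7 statements merged into one kernel-verified Lean document; each statement's English description precedes it below -/
import Mathlib

section
/- If u(z) is a monic palindromic polynomial over ℤ of even degree 2m with |u(1)| = |u(-1)| = 1 (unramified), then u(1)·u(-1) = (-1)^m. -/
/-!
Pairing the coefficients of `u` at `i` and `2m - i` shows `u(1) ≡ (-1)^m u(-1) (mod 4)`;
two units of `ℤ` that are congruent modulo 4 are equal.
-/

open Polynomial Finset

theorem Finset.sum_range_two_mul_add_one_of_symm {M : Type*} [AddCommMonoid M] (f : ℕ → M)
    (m : ℕ) (hf : ∀ i < m, f (2 * m - i) = f i) :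
    ∑ i ∈ range (2 * m + 1), f i = 2 • ∑ i ∈ range m, f i + f m := by
  have hupper : ∑ i ∈ range m, f (m + 1 + i) = ∑ i ∈ range m, f i := by
    rw [← sum_range_reflect]
    refine sum_congr rfl fun i hi => ?_
    have hi : i < m := mem_range.mp hi
    rw [show m + 1 + (m - 1 - i) = 2 * m - i by omega, hf i hi]
  rw [show 2 * m + 1 = m + 1 + m by omega, sum_range_add, hupper, sum_range_succ, two_nsmul]
  abel

theorem Int.two_dvd_one_sub_neg_one_pow (n : ℕ) : (2 : ℤ) ∣ 1 - (-1) ^ n := by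
  rcases neg_one_pow_eq_or ℤ n with h | h <;> simp [h]

/-- The weight `1 - (-1) ^ (m + i)` of the `i`-th coefficient is even, vanishes at the centre
`i = m` and is symmetric about it, so the palindromic pairing `i ↔ 2m - i` doubles it once more. -/
theorem Polynomial.four_dvd_eval_one_sub_neg_one_pow_mul_eval_neg_one (u : ℤ[X]) (m : ℕ)
    (hdeg : u.natDegree ≤ 2 * m) (hpal : ∀ i ≤ 2 * m, u.coeff i = u.coeff (2 * m - i)) :
    4 ∣ u.eval 1 - (-1) ^ m * u.eval (-1) := by
  set f : ℕ → ℤ := fun i => u.coeff i * (1 - (-1) ^ (m + i)) with hf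
  have hsum : u.eval 1 - (-1) ^ m * u.eval (-1) = ∑ i ∈ range (2 * m + 1), f i := by
    have hlt : u.natDegree < 2 * m + 1 := Nat.lt_succ_of_le hdeg
    rw [eval_eq_sum_range' hlt, eval_eq_sum_range' hlt, mul_sum, ← sum_sub_distrib]
    refine sum_congr rfl fun i _ => ?_
    simp only [hf, one_pow, mul_one, pow_add]
    ring
  have hsymm : ∀ i < m, f (2 * m - i) = f i := by
    intro i hi
    have hpow : (-1 : ℤ) ^ (m + (2 * m - i)) = (-1) ^ (m + i) := by
      rw [show m + (2 * m - i) = m + i + 2 * (m - i) by omega, pow_add, pow_mul]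
      simp
    simp only [hf, hpow, ← hpal i (by omega)]
  have hcentre : f m = 0 := by
    simp [hf, ← two_mul, pow_mul]
  rw [hsum, sum_range_two_mul_add_one_of_symm f m hsymm, hcentre, add_zero, nsmul_eq_mul,
    show (4 : ℤ) = 2 * 2 by norm_num]
  exact mul_dvd_mul_left 2 (dvd_sum fun i _ => dvd_mul_of_dvd_right
    (Int.two_dvd_one_sub_neg_one_pow _) _)

theorem Int.mul_eq_of_four_dvd_sub_mul {a b ε : ℤ} (ha : |a| = 1) (hb : |b| = 1)
    (hε : |ε| = 1) (h : 4 ∣ a - ε * b) : a * b = ε := by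
  rcases (abs_eq zero_le_one).mp ha with rfl | rfl <;>
  rcases (abs_eq zero_le_one).mp hb with rfl | rfl <;>
  rcases (abs_eq zero_le_one).mp hε with rfl | rfl <;> omega

theorem stmt0_general (m : ℕ) (u : Polynomial ℤ)
    (hdeg : u.natDegree = 2 * m)
    (hpal : ∀ i ≤ 2 * m, u.coeff i = u.coeff (2 * m - i))
    (h1 : |u.eval 1| = 1) (h2 : |u.eval (-1)| = 1) :
    u.eval 1 * u.eval (-1) = (-1) ^ m :=
  Int.mul_eq_of_four_dvd_sub_mul h1 h2 (by simp)
    (u.four_dvd_eval_one_sub_neg_one_pow_mul_eval_neg_one m hdeg.le hpal)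

/-- If u(z) is a monic palindromic polynomial over ℤ of even degree 2m with
|u(1)| = |u(-1)| = 1 (unramified), then u(1)·u(-1) = (-1)^m. -/
theorem stmt0 (m : ℕ) (u : Polynomial ℤ) (hmonic : u.Monic)
    (hdeg : u.natDegree = 2 * m)
    (hpal : ∀ i ≤ 2 * m, u.coeff i = u.coeff (2 * m - i))
    (h1 : |u.eval 1| = 1) (h2 : |u.eval (-1)| = 1) :
    u.eval 1 * u.eval (-1) = (-1) ^ m :=
  stmt0_general m u hdeg hpal h1 h2
end

section
/- For a complex number δ that is not a root of unity and any integer k ≥ 0, the sum Σ_{j=0}^{k} 1/((1+δ^{−j})(1+δ^{j+1})) equals (1 + δ + ⋯ + δ^k) / (2(1+δ^{k+1})). -/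
/-!
Since `1 + δ⁻ʲ = (1 + δʲ) / δʲ`, the `j`-th summand is `δʲ / ((1 + δʲ)(1 + δʲ⁺¹))`. Writing
`Sₙ = 1 + δ + ⋯ + δⁿ⁻¹`, the partial sums telescope to `Sₙ / (2(1 + δⁿ))`: the increment of the
latter, times `2(1 + δⁿ)(1 + δⁿ⁺¹)`, is `Sₙ₊₁ - Sₙ + δⁿ(Sₙ₊₁ - δ Sₙ) = 2δⁿ`, because `Sₙ₊₁ = 1 + δ Sₙ`.
-/

open Finset

variable {K : Type*} [Field K]

theorem one_div_one_add_zpow_neg_mul {x : K} (hx : x ≠ 0) (j : ℕ) (b : K) :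
    1 / ((1 + x ^ (-(j : ℤ))) * b) = x ^ j / ((1 + x ^ j) * b) := by
  have hxj : x ^ j ≠ 0 := pow_ne_zero j hx
  rw [zpow_neg, zpow_natCast]
  field_simp
  ring

theorem sum_range_pow_div_one_add_pow_mul {x : K} (hx : ∀ n : ℕ, 1 + x ^ n ≠ 0) (n : ℕ) :
    ∑ j ∈ range n, x ^ j / ((1 + x ^ j) * (1 + x ^ (j + 1))) =
      (∑ i ∈ range n, x ^ i) / (2 * (1 + x ^ n)) := by
  have h2 : (2 : K) ≠ 0 := by simpa [one_add_one_eq_two] using hx 0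
  refine sum_range_induction _ (fun n => (∑ i ∈ range n, x ^ i) / (2 * (1 + x ^ n)))
    (by simp) n (fun m _ => ?_)
  have hS : x ^ m + ∑ i ∈ range m, x ^ i = x * ∑ i ∈ range m, x ^ i + 1 :=
    geom_sum_succ'.symm.trans geom_sum_succ
  have hm := hx m
  have hm1 := hx (m + 1)
  rw [geom_sum_succ']
  field_simp
  linear_combination x ^ m * hS

theorem stmt7_general (δ : ℂ) (hδ0 : δ ≠ 0)
    (hδ' : ∀ j : ℤ, δ ^ j ≠ -1) (k : ℕ) :
    ∑ j ∈ Finset.range (k + 1),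
        1 / ((1 + δ ^ (-(j : ℤ))) * (1 + δ ^ (j + 1))) =
      (∑ i ∈ Finset.range (k + 1), δ ^ i) / (2 * (1 + δ ^ (k + 1))) := by
  have hne : ∀ n : ℕ, 1 + δ ^ n ≠ 0 := fun n h =>
    hδ' n (by rw [zpow_natCast]; linear_combination h)
  simp only [one_div_one_add_zpow_neg_mul hδ0]
  exact sum_range_pow_div_one_add_pow_mul hne (k + 1)

/-- For δ ∈ ℂ not a root of unity, nonzero, with δ^j ≠ −1 for all integers j,
and any k ≥ 0: Σ_{j=0}^{k} 1/((1+δ^{−j})(1+δ^{j+1})) = (1+δ+⋯+δ^k)/(2(1+δ^{k+1})). -/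
theorem stmt7 (δ : ℂ) (hδ0 : δ ≠ 0)
    (hδ : ∀ n : ℕ, 0 < n → δ ^ n ≠ 1)
    (hδ' : ∀ j : ℤ, δ ^ j ≠ -1) (k : ℕ) :
    ∑ j ∈ Finset.range (k + 1),
        1 / ((1 + δ ^ (-(j : ℤ))) * (1 + δ ^ (j + 1))) =
      (∑ i ∈ Finset.range (k + 1), δ ^ i) / (2 * (1 + δ ^ (k + 1))) :=
  stmt7_general δ hδ0 hδ' k
end

section
/- Let δ ∈ ℂ with δ ≠ 1. Consider the germ of a holomorphic map f = (f₁, f₂) at 0 ∈ ℂ² of the form f₁(z) = z₁/(1+z₁) + z₂·g₁(z), f₂(z) = z₂·(δ + g₂(z)) where g₁, g₂ are convergent power series vanishing at the origin. Then the ideal 𝔞 = (z₁ − f₁(z), z₂ − f₂(z)) in the ring ℂ{z₁,z₂} of convergent power series equals (z₁², z₂), and hence dim_ℂ ℂ{z}/𝔞 = 2. -/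
/-!
Since `1 + z₁` and `1 - δ - g₂` are units, the generators can be rewritten as
`z₁ - f₁ = z₁² (1 + z₁)⁻¹ - z₂ g₁` and `z₂ - f₂ = z₂ (1 - δ - g₂)`, so they generate the same ideal
as `z₁²` and `z₂`. The quotient by `(z₁², z₂)` is the ring of dual numbers `ℂ[ε]`, realised as the
first-order jet along `z₁`, which is two-dimensional.
-/

open MvPowerSeries

namespace MvPowerSeries

variable {σ R : Type*}

theorem coeff_single_one_mul [CommSemiring R] (i : σ) (f g : MvPowerSeries σ R) :
    coeff (Finsupp.single i 1) (f * g) =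
      coeff 0 f * coeff (Finsupp.single i 1) g + coeff (Finsupp.single i 1) f * coeff 0 g := by
  classical
  rw [coeff_mul, Finsupp.antidiagonal_single, Finset.sum_map,
    show Finset.HasAntidiagonal.antidiagonal 1 = {(0, 1), (1, 0)} by decide,
    Finset.sum_pair (by decide)]
  simp

/-- `f ↦ f(0) + (∂f/∂Xᵢ)(0) ε`. -/
noncomputable def toDualNumber [CommSemiring R] (i : σ) :
    MvPowerSeries σ R →ₐ[R] DualNumber R where
  toFun f :=
    TrivSqZeroExt.inl (constantCoeff f) + TrivSqZeroExt.inr (coeff (Finsupp.single i 1) f)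
  map_one' := by
    classical
    ext <;> simp [coeff_one, Finsupp.single_eq_zero]
  map_mul' f g := by ext <;> simp [coeff_single_one_mul, mul_comm]
  map_zero' := by ext <;> simp
  map_add' f g := by ext <;> simp
  commutes' c := by
    classical
    ext <;> simp [algebraMap_apply, coeff_C, Finsupp.single_eq_zero,
      TrivSqZeroExt.algebraMap_eq_inl']

section toDualNumber

variable [CommSemiring R] (i : σ) (f : MvPowerSeries σ R)

@[simp]
theorem fst_toDualNumber : (toDualNumber i f).fst = constantCoeff f := by
  simp [toDualNumber]

@[simp]
theorem snd_toDualNumber : (toDualNumber i f).snd = coeff (Finsupp.single i 1) f := by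
  simp [toDualNumber]

theorem toDualNumber_surjective : Function.Surjective (toDualNumber (R := R) i) := by
  classical
  intro x
  refine ⟨C x.fst + C x.snd * X i, ?_⟩
  ext <;> simp [coeff_C, coeff_X, Finsupp.single_eq_zero]

end toDualNumber

theorem ker_toDualNumber [CommRing R] :
    RingHom.ker (toDualNumber (R := R) (0 : Fin 2)) = Ideal.span {X 0 ^ 2, X 1} := by
  classical
  refine le_antisymm (fun f hf => ?_) (Ideal.span_le.2 ?_)
  · have h₀ : constantCoeff f = 0 := by simpa using congrArg TrivSqZeroExt.fst hf
    have h₁ : coeff (Finsupp.single 0 1) f = 0 := by simpa using congrArg TrivSqZeroExt.snd hf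
    let f₀ : MvPowerSeries (Fin 2) R := fun m => if m 1 = 0 then coeff m f else 0
    have hf₀ (m) : coeff m f₀ = if m 1 = 0 then coeff m f else 0 := rfl
    obtain ⟨a, ha⟩ : X 0 ^ 2 ∣ f₀ := by
      refine X_pow_dvd_iff.2 fun m hm => ?_
      rw [hf₀]
      split_ifs with hm₁
      · have hm' : m = Finsupp.single 0 (m 0) := by
          ext i
          fin_cases i <;> simp [hm₁]
        interval_cases h : m 0
        · simpa [hm'] using h₀
        · rwa [hm']
      · rfl
    obtain ⟨b, hb⟩ : X 1 ∣ f - f₀ := X_dvd_iff.2 fun m hm => by simp [hf₀, hm]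
    exact Ideal.mem_span_pair.2 ⟨a, b, by linear_combination ha.symm + hb.symm⟩
  · simp only [Set.insert_subset_iff, Set.singleton_subset_iff, SetLike.mem_coe, RingHom.mem_ker]
    constructor <;> ext <;> simp [coeff_X, Finsupp.single_eq_single_iff]

theorem finrank_quotient_span_X_zero_sq_X_one (K : Type*) [Field K] :
    Module.finrank K
      (MvPowerSeries (Fin 2) K ⧸ Ideal.span {(X 0 : MvPowerSeries (Fin 2) K) ^ 2, X 1}) = 2 := by
  rw [← ker_toDualNumber, (Ideal.quotientKerAlgEquivOfSurjective
    (toDualNumber_surjective (R := K) 0)).toLinearEquiv.finrank_eq]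
  -- `DualNumber K` is `K × K` as a `K`-module
  exact (Module.finrank_prod (R := K) (M := K) (M' := K)).trans (by simp)

end MvPowerSeries

theorem Ideal.span_pair_mul_unit_sub {A : Type*} [CommRing A] (a b c : A) {u w : A}
    (hu : IsUnit u) (hw : IsUnit w) : span {a * u - b * c, b * w} = span {a, b} := by
  calc span {a * u - b * c, b * w}
      = span {a * u + -c * b, b} := by
        rw [span_insert, span_insert, span_singleton_mul_right_unit hw,
          show a * u - b * c = a * u + -c * b by ring]
    _ = span {a, b} := by
        rw [span_pair_add_mul_right, span_insert, span_insert, span_singleton_mul_right_unit hu]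

theorem stmt8_general (δ : ℂ) (hδ : δ ≠ 1)
    (g₁ g₂ : MvPowerSeries (Fin 2) ℂ)
    (hg₂ : MvPowerSeries.constantCoeff g₂ = 0)
    (z₁ z₂ f₁ f₂ : MvPowerSeries (Fin 2) ℂ)
    (hz₁ : z₁ = MvPowerSeries.X 0) (hz₂ : z₂ = MvPowerSeries.X 1)
    (hf₁ : f₁ = z₁ * (1 + z₁)⁻¹ + z₂ * g₁)
    (hf₂ : f₂ = z₂ * (MvPowerSeries.C δ + g₂)) :
    Ideal.span {z₁ - f₁, z₂ - f₂} = Ideal.span {z₁ ^ 2, z₂} ∧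
      Module.finrank ℂ
        (MvPowerSeries (Fin 2) ℂ ⧸ Ideal.span {z₁ - f₁, z₂ - f₂}) = 2 := by
  have hcoeff : constantCoeff (1 + z₁) ≠ 0 := by simp [hz₁]
  have hu : IsUnit (1 + z₁)⁻¹ := by
    simpa [isUnit_iff_constantCoeff, constantCoeff_inv] using hcoeff
  have hw : IsUnit (1 - C δ - g₂) := by
    simpa [isUnit_iff_constantCoeff, hg₂, sub_eq_zero] using hδ.symm
  have h₁ : z₁ - f₁ = z₁ ^ 2 * (1 + z₁)⁻¹ - z₂ * g₁ := by
    rw [hf₁]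
    linear_combination -z₁ * MvPowerSeries.mul_inv_cancel _ hcoeff
  have h₂ : z₂ - f₂ = z₂ * (1 - C δ - g₂) := by
    rw [hf₂]
    ring
  have hspan : Ideal.span {z₁ - f₁, z₂ - f₂} = Ideal.span {z₁ ^ 2, z₂} := by
    rw [h₁, h₂]
    exact Ideal.span_pair_mul_unit_sub _ _ _ hu hw
  refine ⟨hspan, ?_⟩
  rw [hspan, hz₁, hz₂]
  exact MvPowerSeries.finrank_quotient_span_X_zero_sq_X_one ℂ

/-- An exceptional fixed point of type I: for the germ
f₁(z) = z₁/(1+z₁) + z₂·g₁(z), f₂(z) = z₂·(δ + g₂(z)) with g₁, g₂ vanishing at the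
origin and δ ≠ 1, the ideal (z₁ − f₁, z₂ − f₂) in the power series ring equals
(z₁², z₂), and hence the quotient has dimension 2 over ℂ. -/
theorem stmt8 (δ : ℂ) (hδ : δ ≠ 1)
    (g₁ g₂ : MvPowerSeries (Fin 2) ℂ)
    (hg₁ : MvPowerSeries.constantCoeff g₁ = 0)
    (hg₂ : MvPowerSeries.constantCoeff g₂ = 0)
    (z₁ z₂ f₁ f₂ : MvPowerSeries (Fin 2) ℂ)
    (hz₁ : z₁ = MvPowerSeries.X 0) (hz₂ : z₂ = MvPowerSeries.X 1)
    (hf₁ : f₁ = z₁ * (1 + z₁)⁻¹ + z₂ * g₁)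
    (hf₂ : f₂ = z₂ * (MvPowerSeries.C δ + g₂)) :
    Ideal.span {z₁ - f₁, z₂ - f₂} = Ideal.span {z₁ ^ 2, z₂} ∧
      Module.finrank ℂ
        (MvPowerSeries (Fin 2) ℂ ⧸ Ideal.span {z₁ - f₁, z₂ - f₂}) = 2 :=
  stmt8_general δ hδ g₁ g₂ hg₂ z₁ z₂ f₁ f₂ hz₁ hz₂ hf₁ hf₂
end

section
/- Fix δ ∈ ℂ not a root of unity and a₀₁, b₁₀, a₂₀ ∈ ℂ. Define sequences by a₁₀^(n) = n, a₀₁^(n) = (1−δⁿ)a₀₁/(1−δ), b₁₀^(n) = (1−δⁿ)b₁₀/(δ^{n−1}(1−δ)), a₂₀^(n) = n(n−1) + n·a₂₀ + (δ/(1−δ))·(n−1 − δ(1−δ^{n−1})/(1−δ))·a₀₁·b₁₀. Then for all n ≥ 1, θ^(n) := ((1−δⁿ)·a₂₀^(n) + δⁿ·a₀₁^(n)·b₁₀^(n)) / (a₁₀^(n))² equals (1−δⁿ)((n−1)(1−δ) + θ)/(n(1−δ)), where θ := (1−δ)a₂₀ + δ·a₀₁·b₁₀. -/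
/-!
Write `q = 1 - δⁿ`. After cancelling `δⁿ / δⁿ⁻¹ = δ`, the coefficient of `a₀₁ b₁₀` in the
numerator is `q δ / (1 - δ) · (n - 1 + (q - δ (1 - δⁿ⁻¹)) / (1 - δ))`, and the geometric
telescoping `q - δ (1 - δⁿ⁻¹) = 1 - δ` reduces it to `q δ n / (1 - δ)`. The whole numerator
is then `q n ((n - 1)(1 - δ) + θ) / (1 - δ)`, and one factor `n` cancels against `n²`.
-/

section
variable {K : Type*} [Field K]

lemma one_sub_pow_sub_mul_one_sub_pow_pred (δ : K) {n : ℕ} (hn : n ≠ 0) :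
    1 - δ ^ n - δ * (1 - δ ^ (n - 1)) = 1 - δ := by
  obtain ⟨m, rfl⟩ := Nat.exists_eq_succ_of_ne_zero hn
  rw [Nat.succ_sub_one, pow_succ']
  ring

lemma pow_mul_mul_div_pow_pred_mul {δ : K} (hδ : δ ≠ 0) {n : ℕ} (hn : n ≠ 0) (x y c : K) :
    δ ^ n * x * (y / (δ ^ (n - 1) * c)) = δ * x * y / c := by
  obtain ⟨m, rfl⟩ := Nat.exists_eq_succ_of_ne_zero hn
  rw [Nat.succ_sub_one, pow_succ', mul_comm (δ ^ m) c, ← div_div, mul_div_assoc']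
  field_simp

lemma theta_numerator_eq {δ : K} (hδ : δ ≠ 1) {n : ℕ} (hn : n ≠ 0) (a01 b10 a20 : K) :
    (1 - δ ^ n) *
        ((n : K) * ((n : K) - 1) + (n : K) * a20 +
          (δ / (1 - δ)) * (((n : K) - 1) - δ * (1 - δ ^ (n - 1)) / (1 - δ)) * a01 * b10) +
      δ * ((1 - δ ^ n) * a01 / (1 - δ)) * ((1 - δ ^ n) * b10) / (1 - δ) =
    (1 - δ ^ n) * n * (((n : K) - 1) * (1 - δ) + ((1 - δ) * a20 + δ * a01 * b10)) /
      (1 - δ) := by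
  have hδ' : 1 - δ ≠ 0 := sub_ne_zero.2 hδ.symm
  have telescope := one_sub_pow_sub_mul_one_sub_pow_pred δ hn
  field_simp
  linear_combination (δ * (1 - δ ^ n) * a01 * b10) * telescope

end

/-- The algebraic identity θ^(n) = (1−δⁿ)((n−1)(1−δ) + θ)/(n(1−δ)) for the
closed-form coefficient sequences of the iterates, where
θ = (1−δ)a₂₀ + δ·a₀₁·b₁₀. -/
theorem stmt10 (δ a01 b10 a20 : ℂ) (hδ0 : δ ≠ 0)
    (hδ : ∀ k : ℕ, 0 < k → δ ^ k ≠ 1) (n : ℕ) (hn : 1 ≤ n) :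
    ((1 - δ ^ n) *
        ((n : ℂ) * ((n : ℂ) - 1) + (n : ℂ) * a20 +
          (δ / (1 - δ)) * (((n : ℂ) - 1) - δ * (1 - δ ^ (n - 1)) / (1 - δ)) *
            a01 * b10) +
      δ ^ n * ((1 - δ ^ n) * a01 / (1 - δ)) *
        ((1 - δ ^ n) * b10 / (δ ^ (n - 1) * (1 - δ)))) / ((n : ℂ)) ^ 2 =
    (1 - δ ^ n) * (((n : ℂ) - 1) * (1 - δ) + ((1 - δ) * a20 + δ * a01 * b10)) /
      ((n : ℂ) * (1 - δ)) := by
  have hn0 : n ≠ 0 := Nat.one_le_iff_ne_zero.1 hn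
  have hδ1 : δ ≠ 1 := by simpa using hδ 1 one_pos
  have hn0' : (n : ℂ) ≠ 0 := Nat.cast_ne_zero.2 hn0
  rw [pow_mul_mul_div_pow_pred_mul hδ0 hn0, theta_numerator_eq hδ1 hn0]
  field_simp
end

section
/- Let δ ∈ ℂ∖{0} be a non-root of unity. Then there is no δ satisfying simultaneously 1 + δ⁻¹ = 1/((1−δ⁻¹)(1−δ²)) + (2δ+θ)/(1−δ)² and 1 + δ⁻³ = 1/((1−δ⁻³)(1−δ⁶)) + (2 + 4δ³ + (1+δ+δ²)θ)/(3(1−δ³)²) for some θ ∈ ℂ, unless δ satisfies (1+δ)(3 + 5δ² − 2δ³ + 9δ⁴ − 2δ⁵ + 5δ⁶ + 3δ⁸) = 0. More precisely: eliminating θ from the two equations yields the polynomial equation (1+δ)(3 + 5δ² − 2δ³ + 9δ⁴ − 2δ⁵ + 5δ⁶ + 3δ⁸) = 0. -/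
/-! Each equation is linear in θ once its denominators are cleared, and the θ-coefficient of the
second is `δ² (1 + δ² + δ⁴)` times that of the first. Eliminating θ leaves
`(1 - δ) (1 - δ²) (1 + δ) (3 + 5δ² - 2δ³ + 9δ⁴ - 2δ⁵ + 5δ⁶ + 3δ⁸) = 0`. -/

lemma mul_one_add_mul_eq_of_one_add_inv_eq {K : Type*} [Field K] {x a : K} (hx0 : x ≠ 0)
    (hx1 : x ≠ 1) (hx2 : x ^ 2 ≠ 1)
    (h : 1 + x⁻¹ = 1 / ((1 - x⁻¹) * (1 - x ^ 2)) + a / (1 - x) ^ 2) :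
    x * (1 + x) * a = (1 - x ^ 2) ^ 2 + x ^ 2 := by
  have hsub : 1 - x ≠ 0 := sub_ne_zero.2 hx1.symm
  have hadd : 1 + x ≠ 0 := fun h0 ↦ hx2 (by linear_combination (x - 1) * h0)
  have hpole : 1 / ((1 - x⁻¹) * (1 - x ^ 2)) = -x / ((1 - x) ^ 2 * (1 + x)) := by
    field_simp
    ring
  rw [hpole] at h
  field_simp at h
  linear_combination -h

/-- Eliminating θ from the two fixed point formula equations for f and f³
yields (1+δ)(3 + 5δ² − 2δ³ + 9δ⁴ − 2δ⁵ + 5δ⁶ + 3δ⁸) = 0. -/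
theorem stmt12 (δ θ : ℂ) (hδ0 : δ ≠ 0)
    (h1 : δ ≠ 1) (h2 : δ ^ 2 ≠ 1) (h3 : δ ^ 3 ≠ 1) (h6 : δ ^ 6 ≠ 1)
    (e1 : 1 + δ⁻¹ =
      1 / ((1 - δ⁻¹) * (1 - δ ^ 2)) + (2 * δ + θ) / (1 - δ) ^ 2)
    (e2 : 1 + δ⁻¹ ^ 3 =
      1 / ((1 - δ⁻¹ ^ 3) * (1 - δ ^ 6)) +
        (2 + 4 * δ ^ 3 + (1 + δ + δ ^ 2) * θ) / (3 * (1 - δ ^ 3) ^ 2)) :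
    (1 + δ) * (3 + 5 * δ ^ 2 - 2 * δ ^ 3 + 9 * δ ^ 4 - 2 * δ ^ 5 + 5 * δ ^ 6 +
      3 * δ ^ 8) = 0 := by
  have hθ₁ := mul_one_add_mul_eq_of_one_add_inv_eq hδ0 h1 h2 e1
  rw [inv_pow, div_mul_eq_div_div _ (3 : ℂ), show δ ^ 6 = (δ ^ 3) ^ 2 by ring] at e2
  have hθ₂ := mul_one_add_mul_eq_of_one_add_inv_eq (pow_ne_zero 3 hδ0) h3
    (by rwa [← pow_mul]) e2
  have helim : (1 - δ) * (1 - δ ^ 2) * ((1 + δ) * (3 + 5 * δ ^ 2 - 2 * δ ^ 3 + 9 * δ ^ 4 -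
      2 * δ ^ 5 + 5 * δ ^ 6 + 3 * δ ^ 8)) = 0 := by
    linear_combination δ ^ 2 * (1 + δ ^ 2 + δ ^ 4) * hθ₁ - 3 * hθ₂
  exact (mul_eq_zero.mp helim).resolve_left
    (mul_ne_zero (sub_ne_zero.2 h1.symm) (sub_ne_zero.2 h2.symm))
end

section
/- Let δ ∈ ℂ be an algebraic unit that is not a root of unity, and let α ∈ ℂ be an algebraic number that is not an algebraic unit, with |α| arbitrary. Set α₁ = δ^{1/2}·α, α₂ = δ^{1/2}·α^{−1} for a fixed square root δ^{1/2} of δ. If α₁^m · α₂^n = 1 for integers m, n, then m = n = 0. -/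
lemma intzpow13 (x : ℂ) (h1 : IsIntegral ℤ x) (h2 : IsIntegral ℤ x⁻¹) (k : ℤ) :
    IsIntegral ℤ (x ^ k) := by
  rcases k with k | k
  · simpa using h1.pow k
  · rw [zpow_negSucc, ← inv_pow]
    exact h2.pow _

lemma unit_of_zpow13 (x : ℂ) (k : ℤ) (hk : k ≠ 0)
    (h1 : IsIntegral ℤ (x ^ k)) (h2 : IsIntegral ℤ (x ^ (-k))) :
    IsIntegral ℤ x ∧ IsIntegral ℤ x⁻¹ := by
  rcases Int.natAbs_eq k with he | he
  · have hpos : 0 < k.natAbs := Int.natAbs_pos.mpr hk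
    rw [he] at h1 h2
    rw [zpow_natCast] at h1
    rw [zpow_neg, ← inv_zpow, zpow_natCast] at h2
    exact ⟨h1.of_pow hpos, h2.of_pow hpos⟩
  · have hpos : 0 < k.natAbs := Int.natAbs_pos.mpr hk
    rw [he] at h1 h2
    rw [neg_neg, zpow_natCast] at h2
    rw [zpow_neg, ← inv_zpow, zpow_natCast] at h1
    exact ⟨h2.of_pow hpos, h1.of_pow hpos⟩

lemma pow_one_of_zpow13 (x : ℂ) (a : ℤ) (ha : a ≠ 0) (h : x ^ a = 1) :
    ∃ k : ℕ, 0 < k ∧ x ^ k = 1 := by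
  refine ⟨a.natAbs, Int.natAbs_pos.mpr ha, ?_⟩
  rcases Int.natAbs_eq a with he | he
  · rw [he, zpow_natCast] at h; exact h
  · rw [he, zpow_neg, zpow_natCast, inv_eq_one] at h; exact h

/-- If δ is an algebraic unit that is not a root of unity, α is a nonzero algebraic
number that is not an algebraic unit, δ^{1/2} is a fixed square root of δ,
α₁ = δ^{1/2}·α and α₂ = δ^{1/2}·α⁻¹, then α₁^m·α₂^n = 1 forces m = n = 0. -/
theorem stmt13 (δ α s : ℂ)
    (hδint : IsIntegral ℤ δ) (hδinvint : IsIntegral ℤ δ⁻¹)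
    (hδru : ∀ k : ℕ, 0 < k → δ ^ k ≠ 1)
    (hαalg : IsAlgebraic ℚ α) (hα0 : α ≠ 0)
    (hαnu : ¬(IsIntegral ℤ α ∧ IsIntegral ℤ α⁻¹))
    (hs : s ^ 2 = δ) (m n : ℤ)
    (h : (s * α) ^ m * (s * α⁻¹) ^ n = 1) :
    m = 0 ∧ n = 0 := by
  by_cases hs0 : s = 0
  · subst hs0
    simp only [zero_mul] at h
    constructor
    · by_contra hm
      rw [zero_zpow m hm, zero_mul] at h
      exact one_ne_zero h.symm
    · by_contra hn
      rw [zero_zpow n hn, mul_zero] at h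
      exact one_ne_zero h.symm
  · -- rewrite h as s^(m+n) * α^(m-n) = 1
    have h2 : s ^ (m + n) * α ^ (m - n) = 1 := by
      rw [zpow_add₀ hs0, zpow_sub₀ hα0]
      rw [mul_zpow, mul_zpow, inv_zpow, ← zpow_neg] at h
      rw [← h, zpow_neg]
      field_simp
    have h3 : δ ^ (m + n) * α ^ (2 * (m - n)) = 1 := by
      rw [← hs, sq, mul_zpow, two_mul, zpow_add₀ hα0]
      calc s^(m+n)*s^(m+n)*(α^(m-n)*α^(m-n))
          = (s^(m+n)*α^(m-n))*(s^(m+n)*α^(m-n)) := by ring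
        _ = 1 := by rw [h2]; ring
    have hb : m - n = 0 := by
      by_contra hb
      have hd0 : δ ≠ 0 := by rw [← hs]; exact pow_ne_zero 2 hs0
      have hαk : α ^ (2 * (m - n)) = δ ^ (-(m + n)) := by
        rw [zpow_neg]
        exact eq_inv_of_mul_eq_one_left (by rw [mul_comm]; exact h3)
      have hαk' : α ^ (-(2 * (m - n))) = δ ^ (m + n) := by
        rw [zpow_neg, hαk, zpow_neg, inv_inv]
      have i1 : IsIntegral ℤ (α ^ (2 * (m - n))) := by
        rw [hαk]; exact intzpow13 δ hδint hδinvint _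
      have i2 : IsIntegral ℤ (α ^ (-(2 * (m - n)))) := by
        rw [hαk']; exact intzpow13 δ hδint hδinvint _
      exact hαnu (unit_of_zpow13 α _ (by omega) i1 i2)
    have hmn : m = n := by omega
    rw [hb, mul_zero, zpow_zero, mul_one] at h3
    have hm0 : m = 0 := by
      by_contra hm
      obtain ⟨k, hk, hk1⟩ := pow_one_of_zpow13 δ (m + n) (by omega) h3
      exact hδru k hk hk1
    exact ⟨hm0, by omega⟩
end

section
/- Let τ be a root of w² − w − 3 (a real quadratic algebraic number). Let P(w) = (w+2)(w³−4w−2)²(w³−w²−2w+1)² / ((w²−2)²(w⁴−4w²−w+1)²). Then P(τ) is a root of 27w² − 11w + 1, and in particular P(τ) is not an algebraic integer. -/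
open Polynomial

/-- If τ is a root of w² − w − 3 then
P(τ) = (τ+2)(τ³−4τ−2)²(τ³−τ²−2τ+1)² / ((τ²−2)²(τ⁴−4τ²−τ+1)²)
is a root of 27w² − 11w + 1; in particular P(τ) is not an algebraic integer. -/
theorem stmt16 (τ P : ℝ) (hτ : τ ^ 2 - τ - 3 = 0)
    (hP : P = ((τ + 2) * (τ ^ 3 - 4 * τ - 2) ^ 2 *
        (τ ^ 3 - τ ^ 2 - 2 * τ + 1) ^ 2) /
      ((τ ^ 2 - 2) ^ 2 * (τ ^ 4 - 4 * τ ^ 2 - τ + 1) ^ 2)) :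
    27 * P ^ 2 - 11 * P + 1 = 0 ∧ ¬IsIntegral ℤ P := by
  have hne1 : τ + 1 ≠ 0 := by
    intro h
    have h' : τ = -1 := by linarith
    subst h'; norm_num at hτ
  have hne2 : 2 * τ + 1 ≠ 0 := by
    intro h
    have h' : τ = -1/2 := by linarith
    subst h'; norm_num at hτ
  have n1 : τ ^ 3 - 4 * τ - 2 = 1 := by linear_combination (τ + 1) * hτ
  have n2 : τ ^ 3 - τ ^ 2 - 2 * τ + 1 = τ + 1 := by linear_combination τ * hτ
  have d1 : τ ^ 2 - 2 = τ + 1 := by linear_combination hτ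
  have d2 : τ ^ 4 - 4 * τ ^ 2 - τ + 1 = 2 * τ + 1 := by
    linear_combination (τ ^ 2 + τ) * hτ
  rw [n1, n2, d1, d2] at hP
  have hD : (8 * τ + 13) ≠ 0 := by
    have : (2 * τ + 1) ^ 2 = 8 * τ + 13 := by linear_combination 4 * hτ
    rw [← this]; positivity
  have hPD : P * (8 * τ + 13) = τ + 2 := by
    rw [hP]
    have h2 : (2 * τ + 1) ^ 2 = 8 * τ + 13 := by linear_combination 4 * hτ
    rw [div_mul_eq_mul_div, div_eq_iff (mul_ne_zero (pow_ne_zero 2 hne1) (pow_ne_zero 2 hne2))]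
    linear_combination (-4*(τ+2)*(τ+1)^2) * hτ
  have eq1 : 27 * P ^ 2 - 11 * P + 1 = 0 := by
    have key : (8 * τ + 13) ^ 2 * (27 * P ^ 2 - 11 * P + 1) = 0 := by
      linear_combination (27 * (P * (8 * τ + 13) + (τ + 2)) - 11 * (8 * τ + 13)) * hPD + 3 * hτ
    have := mul_eq_zero.mp key
    rcases this with h | h
    · exact absurd h (pow_ne_zero 2 hD)
    · exact h
  refine ⟨eq1, ?_⟩
  intro h
  have hQ : IsIntegral ℚ P := h.tower_top
  -- minimal polynomial coefficients are integers
  have hmap : minpoly ℚ P = (minpoly ℤ P).map (algebraMap ℤ ℚ) :=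
    minpoly.isIntegrallyClosed_eq_field_fractions ℚ ℝ h
  have hcoeff : ∀ i, ∃ n : ℤ, (minpoly ℚ P).coeff i = (n : ℚ) := by
    intro i
    exact ⟨(minpoly ℤ P).coeff i, by rw [hmap, Polynomial.coeff_map]; rfl⟩
  set m : ℚ[X] := C 1 * X ^ 2 + C (-11/27) * X + C (1/27) with hm
  have hmdeg : m.natDegree = 2 := natDegree_quadratic (by norm_num)
  have hmne : m ≠ 0 := fun h0 => by simp [h0] at hmdeg
  have hmmonic : m.Monic := by
    unfold Polynomial.Monic
    rw [Polynomial.leadingCoeff, hmdeg]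
    simp [hm, Polynomial.coeff_add, Polynomial.coeff_C_mul]
  have haev : Polynomial.aeval P m = 0 := by
    simp [hm, Polynomial.aeval_add, Polynomial.aeval_mul]
    push_cast
    nlinarith [eq1]
  have hdvd : minpoly ℚ P ∣ m := minpoly.dvd ℚ P haev
  have hdle : (minpoly ℚ P).natDegree ≤ 2 := by
    have := Polynomial.natDegree_le_of_dvd hdvd hmne
    omega
  have hdpos : 0 < (minpoly ℚ P).natDegree := minpoly.natDegree_pos hQ
  interval_cases hdeg : (minpoly ℚ P).natDegree
  · -- degree 1 : P is an integer, contradiction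
    have heq : minpoly ℚ P = X + C ((minpoly ℚ P).coeff 0) :=
      (minpoly.monic hQ).eq_X_add_C hdeg
    obtain ⟨n, hn⟩ := hcoeff 0
    have haev0 : Polynomial.aeval P (minpoly ℚ P) = 0 := minpoly.aeval ℚ P
    rw [heq, hn] at haev0
    simp at haev0
    have hPn : P = -(n : ℝ) := by
      push_cast at haev0; linarith
    rw [hPn] at eq1
    have : (27 * n ^ 2 + 11 * n + 1 : ℝ) = 0 := by push_cast; linarith
    have hZ : 27 * n ^ 2 + 11 * n + 1 = 0 := by exact_mod_cast this
    have hnn : 0 ≤ n * (n + 1) := by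
      rcases le_or_gt 0 n with h'|h'
      · nlinarith
      · nlinarith
    nlinarith [hZ, hnn, sq_nonneg n]
  · -- degree 2 : minpoly = m, constant coeff 1/27 not integer
    have heqm : minpoly ℚ P = m := by
      obtain ⟨c, hc⟩ := hdvd
      have hcne : c ≠ 0 := by
        intro h0; rw [h0, mul_zero] at hc; exact hmne hc
      have hpne : minpoly ℚ P ≠ 0 := minpoly.ne_zero hQ
      have hdegs : m.natDegree = (minpoly ℚ P).natDegree + c.natDegree := by
        rw [hc]; exact Polynomial.natDegree_mul hpne hcne
      have hc0 : c.natDegree = 0 := by omega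
      have hlc : m.leadingCoeff = (minpoly ℚ P).leadingCoeff * c.leadingCoeff := by
        rw [hc]; exact Polynomial.leadingCoeff_mul _ _
      rw [hmmonic, (minpoly.monic hQ), one_mul] at hlc
      have : c = 1 := by
        rw [Polynomial.eq_C_of_natDegree_eq_zero hc0]
        rw [Polynomial.eq_C_of_natDegree_eq_zero hc0] at hlc
        simp at hlc ⊢
        rw [← hlc]
        simp [Polynomial.leadingCoeff]
      rw [hc, this, mul_one]
    obtain ⟨n, hn⟩ := hcoeff 0
    rw [heqm] at hn
    have : (1/27 : ℚ) = (n : ℚ) := by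
      rw [← hn]; simp [hm]
    have h27 : (27 * n : ℚ) = 1 := by rw [← this]; norm_num
    have : (27 * n : ℤ) = 1 := by exact_mod_cast h27
    omega
end
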